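/- arXiv:2103.05593 — 3 statements merged into one kernel-verified Lean document; each statement's English description precedes it below -/
import Mathlib

section
/- Let ℓ > 4 and let r_1, …, r_ℓ : [n]×[n] → [n] be independent uniformly random functions. Then with probability 1 − o(1) as n → ∞, for every S ⊆ [n] with |S| = m and m^(ℓ+2) ≤ n^(ℓ+1), the number of ordered pairs (i,j) ∈ S × S such that r_k(i,j) ∈ S for all k ∈ [ℓ] is at most ℓ·n. -/
/-!
If more than `ℓn` pairs of `S × S` are closed, some set `T` of `t = ℓn + 1` of them is, and a
fixed `T` is closed with probability `(|S|/n)^(tℓ)`. Summing over the `C(|S|², t) ≤ |S|^(2t)/t!`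
choices of `T` and using `|S|^(ℓ+2) ≤ n^(ℓ+1)` bounds the probability for a single `S` by
`n^t/t! ≤ (e n/t)^t ≤ (3/5)^(ℓn)`; a union bound over the `2^n` sets `S` leaves
`(2 (3/5)^5)^n → 0`.
-/

open Filter Finset

section RandomFunctions

variable {ι α β : Type*} [Fintype ι] [Fintype α] [Fintype β]
  [DecidableEq ι] [DecidableEq α] [DecidableEq β]

theorem card_filter_forall_mem_mul_pow (T : Finset α) (S : Finset β) :
    #{r : ι → α → β | ∀ k, ∀ a ∈ T, r k a ∈ S} * Fintype.card β ^ (#T * Fintype.card ι)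
      = #S ^ (#T * Fintype.card ι) * Fintype.card (ι → α → β) := by
  have hfilter : ({r : ι → α → β | ∀ k, ∀ a ∈ T, r k a ∈ S} : Finset _)
      = Fintype.piFinset fun _ ↦ Fintype.piFinset fun a ↦ if a ∈ T then S else univ := by
    ext r
    simp only [mem_filter, mem_univ, true_and, Fintype.mem_piFinset]
    refine forall_congr' fun k ↦ ⟨fun h a ↦ ?_, fun h a ha ↦ by simpa [ha] using h a⟩
    split_ifs with ha
    exacts [h a ha, mem_univ _]
  have hrow : (∏ a, #(if a ∈ T then S else univ)) * Fintype.card β ^ #T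
      = #S ^ #T * Fintype.card β ^ Fintype.card α := by
    simp only [apply_ite card, card_univ]
    rw [prod_ite, prod_const, prod_const, filter_mem_eq_inter, univ_inter, filter_not,
      filter_mem_eq_inter, univ_inter, card_sdiff_of_subset (subset_univ T), card_univ, mul_assoc,
      pow_sub_mul_pow _ (card_le_univ T)]
  rw [hfilter, Fintype.card_piFinset, prod_const, Fintype.card_piFinset, card_univ,
    Fintype.card_fun, Fintype.card_fun, pow_mul, pow_mul, ← mul_pow, hrow, mul_pow]

theorem card_filter_le_card_filter_mul_factorial_le (P : Finset α) (S : Finset β) (t : ℕ) :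
    #{r : ι → α → β | t ≤ #{a ∈ P | ∀ k, r k a ∈ S}} * t.factorial
        * Fintype.card β ^ (t * Fintype.card ι)
      ≤ #P ^ t * #S ^ (t * Fintype.card ι) * Fintype.card (ι → α → β) := by
  have hcover : ({r : ι → α → β | t ≤ #{a ∈ P | ∀ k, r k a ∈ S}} : Finset _)
      ⊆ (P.powersetCard t).biUnion fun T ↦ {r | ∀ k, ∀ a ∈ T, r k a ∈ S} := by
    intro r hr
    obtain ⟨T, hTsub, hTcard⟩ := exists_subset_card_eq (mem_filter.1 hr).2
    refine mem_biUnion.2 ⟨T, mem_powersetCard.2 ⟨hTsub.trans (filter_subset _ _), hTcard⟩, ?_⟩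
    simp only [mem_filter, mem_univ, true_and]
    exact fun k a ha ↦ (mem_filter.1 (hTsub ha)).2 k
  have hterm : ∀ T ∈ P.powersetCard t,
      #{r : ι → α → β | ∀ k, ∀ a ∈ T, r k a ∈ S} * Fintype.card β ^ (t * Fintype.card ι)
        = #S ^ (t * Fintype.card ι) * Fintype.card (ι → α → β) := fun T hT ↦ by
    rw [← (mem_powersetCard.1 hT).2, card_filter_forall_mem_mul_pow]
  calc #{r : ι → α → β | t ≤ #{a ∈ P | ∀ k, r k a ∈ S}} * t.factorial
        * Fintype.card β ^ (t * Fintype.card ι)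
      ≤ t.factorial * ((∑ T ∈ P.powersetCard t, #{r : ι → α → β | ∀ k, ∀ a ∈ T, r k a ∈ S})
          * Fintype.card β ^ (t * Fintype.card ι)) := by
        rw [mul_comm _ t.factorial, mul_assoc]
        gcongr
        exact (card_le_card hcover).trans card_biUnion_le
    _ = t.factorial * (#P).choose t * (#S ^ (t * Fintype.card ι) * Fintype.card (ι → α → β)) := by
        rw [sum_mul, sum_congr rfl hterm, sum_const, card_powersetCard, smul_eq_mul, mul_assoc]
    _ ≤ _ := by
        rw [← Nat.descFactorial_eq_factorial_mul_choose, mul_assoc]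
        gcongr
        exact Nat.descFactorial_le_pow _ _

end RandomFunctions

open Real in
theorem pow_div_factorial_le_exp_one_mul_div_pow {x : ℝ} (hx : 0 ≤ x) (t : ℕ) :
    x ^ t / t.factorial ≤ (exp 1 * x / t) ^ t := by
  rcases t.eq_zero_or_pos with rfl | ht
  · simp
  have htR : (0 : ℝ) < t := by exact_mod_cast ht
  calc x ^ t / t.factorial = (x / t) ^ t * ((t : ℝ) ^ t / t.factorial) := by
        rw [div_pow]; field_simp
    _ ≤ (x / t) ^ t * exp t := by gcongr; exact pow_div_factorial_le_exp _ htR.le t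
    _ = (exp 1 * x / t) ^ t := by
        rw [← exp_one_pow, ← mul_pow, mul_comm, mul_div_assoc]

theorem two_pow_mul_pow_div_factorial_le {ℓ : ℕ} (hℓ : 5 ≤ ℓ) (n : ℕ) :
    (2 : ℝ) ^ n * n ^ (ℓ * n + 1) / (ℓ * n + 1).factorial ≤ (2 * (3 / 5) ^ 5) ^ n := by
  set t := ℓ * n + 1
  have htR : (0 : ℝ) < t := by positivity
  have ht : 5 * n ≤ t := by simp only [t]; nlinarith
  have hratio : Real.exp 1 * n / t ≤ 3 / 5 := by
    rw [div_le_iff₀ htR]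
    have : (5 * n : ℝ) ≤ t := by exact_mod_cast ht
    nlinarith [Real.exp_one_lt_three, (Nat.cast_nonneg n : (0 : ℝ) ≤ n)]
  calc (2 : ℝ) ^ n * n ^ t / t.factorial = 2 ^ n * (n ^ t / t.factorial) := by ring
    _ ≤ 2 ^ n * (3 / 5) ^ t := by
        gcongr
        exact (pow_div_factorial_le_exp_one_mul_div_pow n.cast_nonneg t).trans
          (pow_le_pow_left₀ (by positivity) hratio t)
    _ ≤ 2 ^ n * (3 / 5) ^ (5 * n) := by
        gcongr ?_ * ?_
        exact pow_le_pow_of_le_one (by norm_num) (by norm_num) ht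
    _ = (2 * (3 / 5) ^ 5) ^ n := by rw [mul_pow, pow_mul]

section ClosedPairs

variable {ι α : Type*} [Fintype ι] [DecidableEq α]

/-- `#(closedPairs r S)` is the paper's `Z^S`. -/
def closedPairs (r : ι → α × α → α) (S : Finset α) : Finset (α × α) :=
  {p ∈ S ×ˢ S | ∀ k, r k p ∈ S}

variable [Fintype α]

theorem Nat.card_subtype_eq_card_closedPairs (r : ι → α × α → α) (S : Finset α) :
    Nat.card {p : α × α // p.1 ∈ S ∧ p.2 ∈ S ∧ ∀ k, r k p ∈ S} = #(closedPairs r S) := by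
  rw [Nat.card_eq_fintype_card, Fintype.card_subtype, closedPairs]
  congr 1
  ext p
  simp [and_assoc]

variable [DecidableEq ι]

theorem card_filter_le_card_closedPairs_mul_factorial_le [Nonempty α] {S : Finset α}
    (hS : #S ^ (Fintype.card ι + 2) ≤ Fintype.card α ^ (Fintype.card ι + 1)) (t : ℕ) :
    #{r : ι → α × α → α | t ≤ #(closedPairs r S)} * t.factorial
      ≤ Fintype.card α ^ t * Fintype.card (ι → α × α → α) := by
  refine Nat.le_of_mul_le_mul_right ?_
    (pow_pos (Fintype.card_pos (α := α)) (t * Fintype.card ι))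
  calc #{r : ι → α × α → α | t ≤ #(closedPairs r S)} * t.factorial
        * Fintype.card α ^ (t * Fintype.card ι)
      ≤ #(S ×ˢ S) ^ t * #S ^ (t * Fintype.card ι) * Fintype.card (ι → α × α → α) :=
        card_filter_le_card_filter_mul_factorial_le (S ×ˢ S) S t
    _ = (#S ^ (Fintype.card ι + 2)) ^ t * Fintype.card (ι → α × α → α) := by
        rw [card_product]; ring
    _ ≤ (Fintype.card α ^ (Fintype.card ι + 1)) ^ t * Fintype.card (ι → α × α → α) := by
        gcongr
    _ = _ := by ring

theorem card_filter_exists_le_card_closedPairs_mul_factorial_le [Nonempty α] (t : ℕ) :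
    #{r : ι → α × α → α | ∃ S : Finset α,
        #S ^ (Fintype.card ι + 2) ≤ Fintype.card α ^ (Fintype.card ι + 1) ∧
          t ≤ #(closedPairs r S)} * t.factorial
      ≤ 2 ^ Fintype.card α * Fintype.card α ^ t * Fintype.card (ι → α × α → α) := by
  set small : Finset (Finset α) :=
    {S | #S ^ (Fintype.card ι + 2) ≤ Fintype.card α ^ (Fintype.card ι + 1)}
  have hcover : ({r : ι → α × α → α | ∃ S : Finset α,
        #S ^ (Fintype.card ι + 2) ≤ Fintype.card α ^ (Fintype.card ι + 1) ∧
          t ≤ #(closedPairs r S)} : Finset _)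
      ⊆ small.biUnion fun S ↦ {r | t ≤ #(closedPairs r S)} := by
    intro r hr
    obtain ⟨S, hS, ht⟩ := (mem_filter.1 hr).2
    exact mem_biUnion.2 ⟨S, by simpa [small] using hS, by simpa using ht⟩
  calc _ ≤ (∑ S ∈ small, #{r : ι → α × α → α | t ≤ #(closedPairs r S)}) * t.factorial := by
        gcongr
        exact (card_le_card hcover).trans card_biUnion_le
    _ ≤ ∑ _S ∈ small, Fintype.card α ^ t * Fintype.card (ι → α × α → α) := by
        rw [sum_mul]
        exact sum_le_sum fun S hS ↦
          card_filter_le_card_closedPairs_mul_factorial_le (mem_filter.1 hS).2 t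
    _ ≤ _ := by
        rw [sum_const, smul_eq_mul, mul_assoc]
        gcongr
        exact (card_le_univ small).trans_eq (by simp)

theorem one_sub_pow_le_card_subtype_div_card [Nonempty α] (hℓ : 5 ≤ Fintype.card ι) :
    1 - (2 * (3 / 5) ^ 5 : ℝ) ^ Fintype.card α
      ≤ (Nat.card {r : ι → α × α → α // ∀ S : Finset α,
            #S ^ (Fintype.card ι + 2) ≤ Fintype.card α ^ (Fintype.card ι + 1) →
              #(closedPairs r S) ≤ Fintype.card ι * Fintype.card α} : ℝ)
        / Nat.card (ι → α × α → α) := by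
  rw [Nat.card_eq_fintype_card (α := ι → α × α → α)]
  set t := Fintype.card ι * Fintype.card α + 1
  set N := Fintype.card (ι → α × α → α)
  set bad := #{r : ι → α × α → α | ∃ S : Finset α,
    #S ^ (Fintype.card ι + 2) ≤ Fintype.card α ^ (Fintype.card ι + 1) ∧ t ≤ #(closedPairs r S)}
  set good := fun r : ι → α × α → α ↦ ∀ S : Finset α,
    #S ^ (Fintype.card ι + 2) ≤ Fintype.card α ^ (Fintype.card ι + 1) →
      #(closedPairs r S) ≤ Fintype.card ι * Fintype.card α
  have hsplit : (Nat.card {r // good r} : ℝ) = N - bad := by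
    rw [eq_sub_iff_add_eq]
    norm_cast
    rw [Nat.card_eq_fintype_card, Fintype.card_subtype]
    change _ = #(univ : Finset (ι → α × α → α))
    rw [← card_filter_add_card_filter_not (s := univ) good]
    simp only [bad, good, t, not_forall, not_le, Nat.lt_iff_add_one_le, exists_prop]
  have hN : (0 : ℝ) < N := by exact_mod_cast Fintype.card_pos
  have hbad : (bad : ℝ) / N ≤ (2 * (3 / 5) ^ 5) ^ Fintype.card α := by
    have hcount : (bad : ℝ) * t.factorial ≤ 2 ^ Fintype.card α * Fintype.card α ^ t * N := by
      exact_mod_cast card_filter_exists_le_card_closedPairs_mul_factorial_le t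
    calc (bad : ℝ) / N ≤ 2 ^ Fintype.card α * Fintype.card α ^ t / t.factorial := by
          rw [div_le_div_iff₀ hN (by positivity)]; linarith
      _ ≤ _ := two_pow_mul_pow_div_factorial_le hℓ _
  rw [hsplit, sub_div, div_self hN.ne']
  linarith

end ClosedPairs

/-- Lemma 2: with probability `1 - o(1)` over a uniformly random `ℓ`-tuple of functions
`r : [n]×[n] → [n]`, every `S ⊆ [n]` with `|S|^(ℓ+2) ≤ n^(ℓ+1)` spans at most `ℓ·n`
ordered pairs `(i,j) ∈ S×S` with `r_k(i,j) ∈ S` for all `k`. -/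
theorem lemma_rand (ℓ : ℕ) (hℓ : 4 < ℓ) :
    Tendsto (fun n : ℕ =>
      (Nat.card {r : Fin ℓ → (Fin n × Fin n → Fin n) //
          ∀ S : Finset (Fin n), S.card ^ (ℓ + 2) ≤ n ^ (ℓ + 1) →
            Nat.card {p : Fin n × Fin n //
                p.1 ∈ S ∧ p.2 ∈ S ∧ ∀ k : Fin ℓ, r k p ∈ S} ≤ ℓ * n} : ℝ)
        / (Nat.card (Fin ℓ → (Fin n × Fin n → Fin n)) : ℝ))
      atTop (nhds 1) := by
  have hq : Tendsto (fun n : ℕ ↦ 1 - (2 * (3 / 5) ^ 5 : ℝ) ^ n) atTop (nhds 1) := by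
    simpa using tendsto_const_nhds.sub (tendsto_pow_atTop_nhds_zero_of_lt_one
      (r := (2 * (3 / 5) ^ 5 : ℝ)) (by norm_num) (by norm_num))
  refine tendsto_of_tendsto_of_tendsto_of_le_of_le' hq tendsto_const_nhds ?_
    (Eventually.of_forall fun n ↦ div_le_one_of_le₀ ?_ (Nat.cast_nonneg _))
  · filter_upwards [eventually_ge_atTop 1] with n hn
    have : Nonempty (Fin n) := ⟨⟨0, hn⟩⟩
    simpa only [Nat.card_subtype_eq_card_closedPairs, Fintype.card_fin] using
      one_sub_pow_le_card_subtype_div_card (ι := Fin ℓ) (α := Fin n)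
        (by rw [Fintype.card_fin]; exact hℓ)
  · exact_mod_cast Finite.card_subtype_le _
end

section
/- Let z be the n×n matrix of Boolean pairs with diagonal entries (1,0) and off-diagonal entries (0,1). Then no two distinct rows of z are matching, but for any i₁ ≠ i₂, changing z_{i₁,i₂,1} and z_{i₂,i₁,1} from 0 to 1 makes rows i₁ and i₂ matching. -/
def matchingEntries (a b : Bool × Bool) : Prop := (a.1 && b.1) || (a.2 && b.2)

def rowsMatching {n : ℕ} (x : Fin n → Fin n → Bool × Bool) (i₁ i₂ : Fin n) : Prop :=
  ∀ j : Fin n, matchingEntries (x i₁ j) (x i₂ j)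

/-- The matrix with diagonal `(1,0)` and off-diagonal `(0,1)`. -/
def zMatrix (n : ℕ) : Fin n → Fin n → Bool × Bool :=
  fun i j => if i = j then (true, false) else (false, true)

def setFirstBits {n : ℕ} (x : Fin n → Fin n → Bool × Bool) (i₁ i₂ : Fin n) :
    Fin n → Fin n → Bool × Bool :=
  fun i j => if (i = i₁ ∧ j = i₂) ∨ (i = i₂ ∧ j = i₁) then (true, (x i j).2) else x i j

theorem matchingEntries_iff {a b : Bool × Bool} :
    matchingEntries a b ↔ a.1 ∧ b.1 ∨ a.2 ∧ b.2 := by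
  simp [matchingEntries]

theorem zMatrix_self {n : ℕ} (i : Fin n) : zMatrix n i i = (true, false) := if_pos rfl

theorem zMatrix_of_ne {n : ℕ} {i j : Fin n} (h : i ≠ j) : zMatrix n i j = (false, true) :=
  if_neg h

theorem not_rowsMatching_zMatrix {n : ℕ} {i₁ i₂ : Fin n} (h : i₁ ≠ i₂) :
    ¬ rowsMatching (zMatrix n) i₁ i₂ := fun hm => by
  simpa [matchingEntries_iff, zMatrix_self, zMatrix_of_ne h] using hm i₂

theorem setFirstBits_fst_left {n : ℕ} (x : Fin n → Fin n → Bool × Bool) (i₁ i₂ : Fin n) :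
    (setFirstBits x i₁ i₂ i₁ i₂).1 = true := by
  simp [setFirstBits]

theorem setFirstBits_fst_right {n : ℕ} (x : Fin n → Fin n → Bool × Bool) (i₁ i₂ : Fin n) :
    (setFirstBits x i₁ i₂ i₂ i₁).1 = true := by
  simp [setFirstBits]

theorem setFirstBits_snd {n : ℕ} (x : Fin n → Fin n → Bool × Bool) (i₁ i₂ i j : Fin n) :
    (setFirstBits x i₁ i₂ i j).2 = (x i j).2 := by
  unfold setFirstBits; split_ifs <;> rfl

theorem setFirstBits_diag {n : ℕ} (x : Fin n → Fin n → Bool × Bool) {i₁ i₂ : Fin n}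
    (h : i₁ ≠ i₂) (i : Fin n) : setFirstBits x i₁ i₂ i i = x i i := by
  simp only [setFirstBits]
  rw [if_neg]
  rintro (⟨rfl, rfl⟩ | ⟨rfl, rfl⟩) <;> exact h rfl

/-- In column `i₁` the diagonal entry of row `i₁` meets the flipped entry of row `i₂` in the
first bit (symmetrically in column `i₂`); every other column is off-diagonal in both rows. -/
theorem rowsMatching_setFirstBits_zMatrix {n : ℕ} {i₁ i₂ : Fin n} (h : i₁ ≠ i₂) :
    rowsMatching (setFirstBits (zMatrix n) i₁ i₂) i₁ i₂ := by
  intro j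
  rw [matchingEntries_iff]
  by_cases h₁ : j = i₁
  · subst h₁
    exact .inl ⟨by simp [setFirstBits_diag _ h, zMatrix_self], setFirstBits_fst_right _ _ _⟩
  by_cases h₂ : j = i₂
  · subst h₂
    exact .inl ⟨setFirstBits_fst_left _ _ _, by simp [setFirstBits_diag _ h, zMatrix_self]⟩
  · right
    simp [setFirstBits_snd, zMatrix_of_ne (Ne.symm h₁), zMatrix_of_ne (Ne.symm h₂)]

theorem zMatrix_rows (n : ℕ) (i₁ i₂ : Fin n) (h : i₁ ≠ i₂) :
    ¬ rowsMatching (zMatrix n) i₁ i₂ ∧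
    rowsMatching (fun i j =>
      if (i = i₁ ∧ j = i₂) ∨ (i = i₂ ∧ j = i₁) then (true, (zMatrix n i j).2)
      else zMatrix n i j) i₁ i₂ :=
  ⟨not_rowsMatching_zMatrix h, rowsMatching_setFirstBits_zMatrix h⟩
end

section
/- Let z be the n×n matrix of Boolean pairs with diagonal (1,0) and off-diagonal (0,1). Any partial assignment ρ consistent with z such that for every unordered pair {i₁,i₂} of distinct indices, both variables z_{i₁,i₂,1} and z_{i₂,i₁,1} are unread by ρ, fails to certify that no two rows can be made matching; hence any certificate that z contains no pair of rows extendable to a matching pair (with no bad rows) must read at least one of z_{i₁,i₂,1}, z_{i₂,i₁,1} for each pair, and thus has size at least n(n−1)/2. -/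
/-!
For `i₁ ≠ i₂`, switching on the first coordinates of the entries `(i₁, i₂)` and `(i₂, i₁)` of `z`
makes rows `i₁` and `i₂` match (they now share a `1` in the first coordinate at both places where
`z` puts them out of step), and switching bits on never creates a `(0,0)` entry. So a certificate
consistent with `z` must read `z_{i₁,i₂,1}` or `z_{i₂,i₁,1}` for every unordered pair `{i₁, i₂}`:
the read positions of this shape and their transposes cover all `n(n-1)` off-diagonal cells.
-/

open Finset

/-- Rows `i₁`, `i₂` of `x` are matching. -/
def RowsMatch {n : ℕ} (x : Fin n → Fin n → Fin 2 → Bool) (i₁ i₂ : Fin n) : Prop :=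
  ∀ j : Fin n, ∃ b : Fin 2, x i₁ j b = true ∧ x i₂ j b = true

/-- Row `i` of `x` is bad: some entry is `(0,0)`. -/
def BadRow {n : ℕ} (x : Fin n → Fin n → Fin 2 → Bool) (i : Fin n) : Prop :=
  ∃ j : Fin n, ∀ b : Fin 2, x i j b = false

/-- `x` is consistent with the partial input `ρ` (agrees on all read positions). -/
def ConsistentWith {n : ℕ} (ρ : Fin n → Fin n → Fin 2 → Option Bool)
    (x : Fin n → Fin n → Fin 2 → Bool) : Prop :=
  ∀ i j b, ∀ v : Bool, ρ i j b = some v → x i j b = v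

/-- `ρ` certifies that no consistent completion contains a matching pair of distinct rows
with no bad rows. -/
def CertifiesNoMatch {n : ℕ} (ρ : Fin n → Fin n → Fin 2 → Option Bool) : Prop :=
  ∀ x : Fin n → Fin n → Fin 2 → Bool, ConsistentWith ρ x →
    ¬ ∃ i₁ i₂ : Fin n, i₁ ≠ i₂ ∧ RowsMatch x i₁ i₂ ∧ ∀ i : Fin n, ¬ BadRow x i

/-- The input with diagonal entries `(1,0)` and off-diagonal entries `(0,1)`. -/
def zInput (n : ℕ) : Fin n → Fin n → Fin 2 → Bool :=
  fun i j b => if i = j then b = 0 else b = 1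

section Completions

variable {n : ℕ} {x y : Fin n → Fin n → Fin 2 → Bool}

theorem ConsistentWith.of_eq_on_read {ρ : Fin n → Fin n → Fin 2 → Option Bool}
    (h : ConsistentWith ρ x) (hxy : ∀ i j b, ρ i j b ≠ none → x i j b = y i j b) :
    ConsistentWith ρ y := fun i j b v hv =>
  hxy i j b (by simp [hv]) ▸ h i j b v hv

theorem BadRow.anti (hxy : x ≤ y) {i : Fin n} (h : BadRow y i) : BadRow x i :=
  let ⟨j, hj⟩ := h
  ⟨j, fun b => le_bot_iff.1 (by simpa [hj b] using hxy i j b)⟩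

end Completions

theorem not_badRow_zInput {n : ℕ} (i : Fin n) : ¬ BadRow (zInput n) i := by
  rintro ⟨j, hj⟩
  by_cases hij : i = j
  · simpa [zInput, hij] using hj 0
  · simpa [zInput, hij] using hj 1

def zInputWithPair (n : ℕ) (i₁ i₂ : Fin n) : Fin n → Fin n → Fin 2 → Bool :=
  fun i j b => zInput n i j b || decide (b = 0 ∧ (i = i₁ ∧ j = i₂ ∨ i = i₂ ∧ j = i₁))

theorem zInput_le_zInputWithPair (n : ℕ) (i₁ i₂ : Fin n) : zInput n ≤ zInputWithPair n i₁ i₂ :=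
  fun _ _ _ => Bool.left_le_or _ _

theorem rowsMatch_zInputWithPair {n : ℕ} {i₁ i₂ : Fin n} (hne : i₁ ≠ i₂) :
    RowsMatch (zInputWithPair n i₁ i₂) i₁ i₂ := by
  intro j
  by_cases hj : j = i₁ ∨ j = i₂
  · refine ⟨0, ?_⟩
    rcases hj with rfl | rfl <;> simp [zInputWithPair, zInput]
  · obtain ⟨hj₁, hj₂⟩ := not_or.1 hj
    exact ⟨1, by simp [zInputWithPair, zInput, Ne.symm hj₁, Ne.symm hj₂]⟩

theorem not_certifiesNoMatch_of_unread {n : ℕ} {ρ : Fin n → Fin n → Fin 2 → Option Bool}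
    (hcons : ConsistentWith ρ (zInput n)) {i₁ i₂ : Fin n} (hne : i₁ ≠ i₂)
    (h₁ : ρ i₁ i₂ 0 = none) (h₂ : ρ i₂ i₁ 0 = none) : ¬ CertifiesNoMatch ρ := by
  have hle := zInput_le_zInputWithPair n i₁ i₂
  have hcons' : ConsistentWith ρ (zInputWithPair n i₁ i₂) := by
    refine hcons.of_eq_on_read fun i j b hread => ?_
    have : ¬ (b = 0 ∧ (i = i₁ ∧ j = i₂ ∨ i = i₂ ∧ j = i₁)) := by
      rintro ⟨rfl, ⟨rfl, rfl⟩ | ⟨rfl, rfl⟩⟩ <;> simp_all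
    simp [zInputWithPair, this]
  exact fun hc => hc _ hcons' ⟨i₁, i₂, hne, (rowsMatch_zInputWithPair hne),
    fun i hbad => not_badRow_zInput i (hbad.anti hle)⟩

theorem card_mul_pred_le_two_mul_card {α : Type*} [Fintype α] [DecidableEq α]
    (S : Finset (α × α)) (hS : ∀ a b, a ≠ b → (a, b) ∈ S ∨ (b, a) ∈ S) :
    Fintype.card α * (Fintype.card α - 1) ≤ 2 * S.card := by
  have hcover : (Finset.univ : Finset α).offDiag ⊆ S ∪ S.image Prod.swap := by
    rintro ⟨a, b⟩ hab
    rcases hS a b (Finset.mem_offDiag.1 hab).2.2 with h | h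
    · exact Finset.mem_union_left _ h
    · exact Finset.mem_union_right _ (Finset.mem_image.2 ⟨(b, a), h, rfl⟩)
  calc Fintype.card α * (Fintype.card α - 1) = (Finset.univ : Finset α).offDiag.card := by
        rw [Finset.offDiag_card, Finset.card_univ, Nat.mul_sub_one]
    _ ≤ (S ∪ S.image Prod.swap).card := Finset.card_le_card hcover
    _ ≤ S.card + (S.image Prod.swap).card := Finset.card_union_le _ _
    _ = 2 * S.card := by rw [Finset.card_image_of_injective _ Prod.swap_injective]; ring

/-- A partial input consistent with `z` leaving, for every pair of distinct indices `i₁,i₂`,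
both first-coordinate variables at positions `(i₁,i₂)` and `(i₂,i₁)` unread cannot certify
that no completion has a matching pair of rows (with no bad rows); hence any such certificate
must read at least `n(n-1)/2` variables. -/
theorem cert_lower_bound (n : ℕ) (hn : 2 ≤ n)
    (ρ : Fin n → Fin n → Fin 2 → Option Bool)
    (hcons : ConsistentWith ρ (zInput n)) :
    ((∀ i₁ i₂ : Fin n, i₁ ≠ i₂ → ρ i₁ i₂ 0 = none ∧ ρ i₂ i₁ 0 = none) →
      ¬ CertifiesNoMatch ρ) ∧
    (CertifiesNoMatch ρ →
      n * (n - 1) / 2 ≤ (Finset.univ.filter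
        (fun p : Fin n × Fin n × Fin 2 => ρ p.1 p.2.1 p.2.2 ≠ none)).card) := by
  refine ⟨fun hunread => ?_, fun hc => ?_⟩
  · have hne : (⟨0, by omega⟩ : Fin n) ≠ ⟨1, by omega⟩ := by simp
    exact not_certifiesNoMatch_of_unread hcons hne (hunread _ _ hne).1 (hunread _ _ hne).2
  · set S := Finset.univ.filter (fun p : Fin n × Fin n => ρ p.1 p.2 0 ≠ none)
    have hS : ∀ a b, a ≠ b → (a, b) ∈ S ∨ (b, a) ∈ S := fun a b hab => by
      by_contra h
      simp only [S, Finset.mem_filter, Finset.mem_univ, true_and, not_or, not_not] at h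
      exact not_certifiesNoMatch_of_unread hcons hab h.1 h.2 hc
    have hcount := card_mul_pred_le_two_mul_card S hS
    rw [Fintype.card_fin] at hcount
    calc n * (n - 1) / 2 ≤ S.card := by omega
      _ ≤ _ := card_le_card_of_injOn (fun p => (p.1, p.2, (0 : Fin 2)))
          (fun p hp => by simpa [S] using hp) (fun p _ q _ h => by simpa [Prod.ext_iff] using h)
end
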